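/- Let (X, Y) have joint distribution P on finite sets, with Z drawn from a model conditional Q̂(·|X,Y), and let Q̃(·|Y) be another family of conditional distributions depending only on Y. Suppose Q̂ is calibrated to Q̃ in the sense that α = 0 minimizes α ↦ CE(P‖Q̂_α), where Q̂_α(z|x,y) := Q̂(z|x,y)·Q̃(z|y)^α / Z_α(x,y) and CE(P‖R) := E_{(x,y)∼P}E_{z∼P(·|x,y)}[log(1/R(z|x,y))]. Then, for the joint distribution D(x,y,z) := P(x,y)·Q̂(z|x,y) of (X, Y, Ẑ), one has E_{(x,y)∼P}E_{z∼Q̂(·|x,y)}[log(1/Q̃(z|y))] = E_{(x,y)∼P}E_{z∼P(·|x,y)}[log(1/Q̃(z|y))]. -/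

import Mathlib

/-!
With `tilt q t α ∝ q · t ^ α` and `∑ z, p z = 1`, the cross entropy `CE(p ‖ tilt q t α)` equals
`log Z(α) - ∑ p log q - α ∑ p log t`, whose derivative in `α` is `E_{tilt q t α}[log t] - E_p[log t]`.
At `α = 0` the tilted model is `q` itself, so the vanishing derivative of the averaged cross
entropy at its minimum `α = 0` is exactly the equality of the two sides.
-/

open Real Finset

namespace Calibration

variable {Z : Type*} [Fintype Z]

noncomputable def crossEntropy (p r : Z → ℝ) : ℝ :=
  ∑ z, p z * log (1 / r z)

noncomputable def tilt (q t : Z → ℝ) (α : ℝ) : Z → ℝ :=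
  fun z => q z * t z ^ α / ∑ z', q z' * t z' ^ α

lemma crossEntropy_eq_neg_sum (p r : Z → ℝ) :
    crossEntropy p r = -∑ z, p z * log (r z) := by
  simp only [crossEntropy, one_div, log_inv, mul_neg, sum_neg_distrib]

lemma tilt_zero {q : Z → ℝ} (hq1 : ∑ z, q z = 1) (t : Z → ℝ) : tilt q t 0 = q := by
  funext z
  simp only [tilt, rpow_zero, mul_one, hq1, div_one]

variable {q t : Z → ℝ}

lemma sum_mul_rpow_pos [Nonempty Z] (hq : ∀ z, 0 < q z) (ht : ∀ z, 0 < t z) (α : ℝ) :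
    0 < ∑ z, q z * t z ^ α :=
  sum_pos (fun z _ => mul_pos (hq z) (rpow_pos_of_pos (ht z) α)) univ_nonempty

lemma crossEntropy_tilt [Nonempty Z] {p : Z → ℝ} (hp1 : ∑ z, p z = 1)
    (hq : ∀ z, 0 < q z) (ht : ∀ z, 0 < t z) (α : ℝ) :
    crossEntropy p (tilt q t α) =
      log (∑ z, q z * t z ^ α) - ∑ z, p z * log (q z) - α * ∑ z, p z * log (t z) := by
  have hterm : ∀ z, log (1 / tilt q t α z) =
      log (∑ z', q z' * t z' ^ α) - log (q z) - α * log (t z) := fun z => by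
    rw [tilt, one_div, log_inv, log_div (mul_pos (hq z) (rpow_pos_of_pos (ht z) α)).ne'
      (sum_mul_rpow_pos hq ht α).ne', log_mul (hq z).ne' (rpow_pos_of_pos (ht z) α).ne',
      log_rpow (ht z)]
    ring
  simp only [crossEntropy, hterm, mul_sub, sum_sub_distrib, ← sum_mul, hp1, one_mul, mul_sum]
  exact congrArg _ (sum_congr rfl fun z _ => by ring)

lemma hasDerivAt_log_sum_mul_rpow [Nonempty Z] (hq : ∀ z, 0 < q z) (ht : ∀ z, 0 < t z)
    (α : ℝ) :
    HasDerivAt (fun a => log (∑ z, q z * t z ^ a)) (∑ z, tilt q t α z * log (t z)) α := by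
  have hsum : HasDerivAt (fun a => ∑ z, q z * t z ^ a) (∑ z, q z * t z ^ α * log (t z)) α :=
    HasDerivAt.fun_sum fun z _ => by
      simpa only [mul_assoc] using
        ((hasStrictDerivAt_const_rpow (ht z) α).hasDerivAt).const_mul (q z)
  convert hsum.log (sum_mul_rpow_pos hq ht α).ne' using 1
  simp only [tilt, div_mul_eq_mul_div, ← sum_div]

lemma hasDerivAt_crossEntropy_tilt [Nonempty Z] {p : Z → ℝ} (hp1 : ∑ z, p z = 1)
    (hq : ∀ z, 0 < q z) (ht : ∀ z, 0 < t z) (α : ℝ) :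
    HasDerivAt (fun a => crossEntropy p (tilt q t a))
      (crossEntropy p t - crossEntropy (tilt q t α) t) α := by
  rw [show (fun a => crossEntropy p (tilt q t a)) = _ from funext (crossEntropy_tilt hp1 hq ht)]
  refine (((hasDerivAt_log_sum_mul_rpow hq ht α).sub_const (∑ z, p z * log (q z))).sub
    (hasDerivAt_mul_const (∑ z, p z * log (t z)))).congr_deriv ?_
  rw [crossEntropy_eq_neg_sum, crossEntropy_eq_neg_sum]
  ring

lemma hasDerivAt_crossEntropy_tilt_zero {p : Z → ℝ} (hp1 : ∑ z, p z = 1)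
    (hq : ∀ z, 0 < q z) (hq1 : ∑ z, q z = 1) (ht : ∀ z, 0 < t z) :
    HasDerivAt (fun a => crossEntropy p (tilt q t a)) (crossEntropy p t - crossEntropy q t) 0 := by
  have : Nonempty Z :=
    univ_nonempty_iff.mp (nonempty_of_sum_ne_zero (hq1 ▸ one_ne_zero))
  simpa only [tilt_zero hq1] using hasDerivAt_crossEntropy_tilt hp1 hq ht 0

end Calibration

open Calibration in
theorem stmt16_general {X Y Z : Type*} [Fintype X] [Fintype Y] [Fintype Z]
    (Pxy : X → Y → ℝ) (Pc : X → Y → Z → ℝ) (Qh : X → Y → Z → ℝ) (Qt : Y → Z → ℝ)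
    (hPc1 : ∀ x y, ∑ z, Pc x y z = 1)
    (hQh0 : ∀ x y z, 0 < Qh x y z) (hQh1 : ∀ x y, ∑ z, Qh x y z = 1)
    (hQt0 : ∀ y z, 0 < Qt y z)
    (hcal : ∀ α : ℝ,
      (∑ x, ∑ y, Pxy x y * ∑ z, Pc x y z *
          Real.log (1 / (Qh x y z * Qt y z ^ (0 : ℝ) /
            (∑ z', Qh x y z' * Qt y z' ^ (0 : ℝ))))) ≤
        ∑ x, ∑ y, Pxy x y * ∑ z, Pc x y z *
          Real.log (1 / (Qh x y z * Qt y z ^ α / (∑ z', Qh x y z' * Qt y z' ^ α)))) :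
    (∑ x, ∑ y, Pxy x y * ∑ z, Qh x y z * Real.log (1 / Qt y z)) =
      ∑ x, ∑ y, Pxy x y * ∑ z, Pc x y z * Real.log (1 / Qt y z) := by
  set F : ℝ → ℝ := fun α => ∑ x, ∑ y, Pxy x y * crossEntropy (Pc x y) (tilt (Qh x y) (Qt y) α)
  have hF : HasDerivAt F (∑ x, ∑ y, Pxy x y *
      (crossEntropy (Pc x y) (Qt y) - crossEntropy (Qh x y) (Qt y))) 0 :=
    HasDerivAt.fun_sum fun x _ => HasDerivAt.fun_sum fun y _ =>
      (hasDerivAt_crossEntropy_tilt_zero (hPc1 x y) (hQh0 x y) (hQh1 x y) (hQt0 y)).const_mul _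
  have hmin : IsLocalMin F 0 := Filter.Eventually.of_forall hcal
  have hzero := hmin.hasDerivAt_eq_zero hF
  simp only [mul_sub, sum_sub_distrib, sub_eq_zero] at hzero
  exact hzero.symm

/-- First-order optimality of calibration: if `α = 0` minimizes the cross entropy of the
tilted family `Q̂_α ∝ Q̂ · Q̃^α`, then the expected log-loss of `Q̃` is the same whether
the last symbol is drawn from the model `Q̂` or from the true conditional `Pc`. -/
theorem stmt16 {X Y Z : Type*} [Fintype X] [Fintype Y] [Fintype Z]
    (Pxy : X → Y → ℝ) (Pc : X → Y → Z → ℝ) (Qh : X → Y → Z → ℝ) (Qt : Y → Z → ℝ)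
    (hPxy0 : ∀ x y, 0 ≤ Pxy x y) (hPxy1 : ∑ x, ∑ y, Pxy x y = 1)
    (hPc0 : ∀ x y z, 0 ≤ Pc x y z) (hPc1 : ∀ x y, ∑ z, Pc x y z = 1)
    (hQh0 : ∀ x y z, 0 < Qh x y z) (hQh1 : ∀ x y, ∑ z, Qh x y z = 1)
    (hQt0 : ∀ y z, 0 < Qt y z) (hQt1 : ∀ y, ∑ z, Qt y z = 1)
    (hcal : ∀ α : ℝ,
      (∑ x, ∑ y, Pxy x y * ∑ z, Pc x y z *
          Real.log (1 / (Qh x y z * Qt y z ^ (0 : ℝ) /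
            (∑ z', Qh x y z' * Qt y z' ^ (0 : ℝ))))) ≤
        ∑ x, ∑ y, Pxy x y * ∑ z, Pc x y z *
          Real.log (1 / (Qh x y z * Qt y z ^ α / (∑ z', Qh x y z' * Qt y z' ^ α)))) :
    (∑ x, ∑ y, Pxy x y * ∑ z, Qh x y z * Real.log (1 / Qt y z)) =
      ∑ x, ∑ y, Pxy x y * ∑ z, Pc x y z * Real.log (1 / Qt y z) :=
  stmt16_general Pxy Pc Qh Qt hPc1 hQh0 hQh1 hQt0 hcal
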